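/- arXiv:0909.0588 — 3 statements merged into one kernel-verified Lean document; each statement's English description precedes it below -/
import Mathlib

section
/- Let F be a finite field, n a positive integer, C an F-linear subspace of F^n, S a set of coordinate positions in {1,…,n}, and t a nonnegative integer. Then the following two conditions are equivalent: (i) every codeword c ∈ C of Hamming weight at most 2t satisfies c_i = 0 for every position i ∈ S; (ii) for every vector v ∈ F^n and all codewords c, c' ∈ C with d(v,c) ≤ t and d(v,c') ≤ t, one has c_i = c'_i for every position i ∈ S (i.e., up to t errors can be corrected up to an admissible decoding error, where decoding errors are admissible exactly on the positions outside S). -/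
/-!
Codewords of `C` within distance `t` of a common word differ by a codeword of weight at
most `2t`, which gives (i) ⇒ (ii). Conversely, any word `c` of weight at most `2t` can be
split at its support into a word `v` with `d(v, c) ≤ t` and `d(v, 0) ≤ t`; applying (ii) to
the codewords `c` and `0` shows that `c` vanishes on `S`.
-/

open Finset

section Splitting

variable {ι : Type*} [Fintype ι] {β : ι → Type*} [∀ i, DecidableEq (β i)]
  [∀ i, Zero (β i)]

theorem hammingNorm_piecewise_zero_le (A : Finset ι) (x : ∀ i, β i)
    [∀ i, Decidable (i ∈ A)] :
    hammingNorm (A.piecewise x 0) ≤ #A :=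
  card_le_card fun i hi => by
    by_contra hiA
    simp [hiA] at hi

theorem hammingDist_piecewise_zero_le [DecidableEq ι] (A : Finset ι) (x : ∀ i, β i)
    [∀ i, Decidable (i ∈ A)] :
    hammingDist (A.piecewise x 0) x ≤ #(({i | x i ≠ 0} : Finset ι) \ A) :=
  card_le_card fun i hi => by
    by_cases hiA : i ∈ A
    · simp [hiA] at hi
    · simp_all [eq_comm]

theorem exists_hammingDist_le_of_hammingNorm_le_add {a b : ℕ} (x : ∀ i, β i)
    (hx : hammingNorm x ≤ a + b) : ∃ y, hammingDist y x ≤ a ∧ hammingNorm y ≤ b := by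
  classical
  obtain ⟨A, hA, hAcard⟩ := exists_subset_card_eq (Nat.sub_le (hammingNorm x) a)
  refine ⟨A.piecewise x 0, ?_, ?_⟩
  · calc hammingDist (A.piecewise x 0) x ≤ #(({i | x i ≠ 0} : Finset ι) \ A) :=
          hammingDist_piecewise_zero_le A x
      _ = hammingNorm x - #A := card_sdiff_of_subset hA
      _ ≤ a := by omega
  · calc hammingNorm (A.piecewise x 0) ≤ #A := hammingNorm_piecewise_zero_le A x
      _ ≤ b := by omega

end Splitting

theorem hammingNorm_sub_le_of_hammingDist_le {ι : Type*} [Fintype ι] {β : ι → Type*}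
    [∀ i, DecidableEq (β i)] [∀ i, AddGroup (β i)] {v x y : ∀ i, β i} {t : ℕ}
    (hx : hammingDist v x ≤ t) (hy : hammingDist v y ≤ t) : hammingNorm (x - y) ≤ 2 * t := by
  calc hammingNorm (x - y) = hammingDist x y := by
        simp only [hammingNorm, hammingDist, Pi.sub_apply, ne_eq, sub_eq_zero]
    _ ≤ hammingDist x v + hammingDist v y := hammingDist_triangle x v y
    _ ≤ 2 * t := by rw [hammingDist_comm]; omega

theorem receding_horizon_admissible_errors_general
    (F : Type*) [Field F] [DecidableEq F]
    (n : ℕ) (C : Submodule F (Fin n → F)) (S : Set (Fin n)) (t : ℕ) :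
    (∀ c ∈ C, hammingNorm c ≤ 2 * t → ∀ i ∈ S, c i = 0) ↔
    (∀ v : Fin n → F, ∀ c ∈ C, ∀ c' ∈ C,
        hammingDist v c ≤ t → hammingDist v c' ≤ t → ∀ i ∈ S, c i = c' i) := by
  constructor
  · intro h v c hc c' hc' hvc hvc' i hi
    exact sub_eq_zero.mp <|
      h (c - c') (C.sub_mem hc hc') (hammingNorm_sub_le_of_hammingDist_le hvc hvc') i hi
  · intro h c hc hw i hi
    obtain ⟨v, hvc, hv⟩ := exists_hammingDist_le_of_hammingNorm_le_add (a := t) (b := t) c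
      (by omega)
    exact h v c hc 0 C.zero_mem hvc (by rwa [hammingDist_zero_right]) i hi

/-- For a linear code `C ⊆ F^n` over a finite field `F`, a set `S` of
positions and `t : ℕ`, the following are equivalent:
(i) every codeword of Hamming weight at most `2t` vanishes on all positions of `S`;
(ii) any two codewords within Hamming distance `t` of a common vector `v` agree on `S`. -/
theorem receding_horizon_admissible_errors
    (F : Type*) [Field F] [Fintype F] [DecidableEq F]
    (n : ℕ) (hn : 0 < n) (C : Submodule F (Fin n → F)) (S : Set (Fin n)) (t : ℕ) :
    (∀ c ∈ C, hammingNorm c ≤ 2 * t → ∀ i ∈ S, c i = 0) ↔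
    (∀ v : Fin n → F, ∀ c ∈ C, ∀ c' ∈ C,
        hammingDist v c ≤ t → hammingDist v c' ≤ t → ∀ i ∈ S, c i = c' i) :=
  receding_horizon_admissible_errors_general F n C S t
end

section
/- Let F be a finite field, n a positive integer, C an F-linear subspace of F^n, S a set of coordinate positions in {1,…,n}, and t a nonnegative integer. Assume that every codeword c ∈ C of Hamming weight at most 2t satisfies c_i = 0 for every i ∈ S. Then for every codeword c ∈ C and every error vector e ∈ F^n with Hamming weight w(e) ≤ t, every codeword c' ∈ C that minimizes the Hamming distance to c + e over C (i.e., d(c+e, c') ≤ d(c+e, x) for all x ∈ C) agrees with c on all positions of S: c'_i = c_i for every i ∈ S. -/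
/-!
A nearest codeword `c'` to `c + e` is at distance at most `w(e) ≤ t` from it, as `c` itself is
a candidate; by the triangle inequality `d(c, c') ≤ 2t`. So `c' - c` is a codeword of weight at
most `2t`, which vanishes on `S` by hypothesis.
-/

theorem hammingDist_self_add {ι : Type*} [Fintype ι] {β : ι → Type*} [∀ i, AddGroup (β i)]
    [∀ i, DecidableEq (β i)] (x e : ∀ i, β i) : hammingDist x (x + e) = hammingNorm e := by
  rw [hammingDist_eq_hammingNorm, neg_add_cancel_left]

theorem hammingDist_le_two_mul_of_forall_le {ι : Type*} [Fintype ι] {β : ι → Type*}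
    [∀ i, DecidableEq (β i)] {C : Set (∀ i, β i)} {y c c' : ∀ i, β i} {t : ℕ}
    (hc : c ∈ C) (hy : hammingDist c y ≤ t)
    (hc' : ∀ x ∈ C, hammingDist y c' ≤ hammingDist y x) :
    hammingDist c c' ≤ 2 * t := by
  have hyc' : hammingDist y c' ≤ t := by
    calc hammingDist y c' ≤ hammingDist y c := hc' c hc
      _ = hammingDist c y := hammingDist_comm y c
      _ ≤ t := hy
  calc hammingDist c c' ≤ hammingDist c y + hammingDist y c' := hammingDist_triangle c y c'
    _ ≤ 2 * t := by omega

theorem receding_horizon_corollary_general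
    (F : Type*) [Field F] [DecidableEq F]
    (n : ℕ) (C : Submodule F (Fin n → F)) (S : Set (Fin n)) (t : ℕ)
    (hC : ∀ c ∈ C, hammingNorm c ≤ 2 * t → ∀ i ∈ S, c i = 0) :
    ∀ c ∈ C, ∀ e : Fin n → F, hammingNorm e ≤ t →
      ∀ c' ∈ C, (∀ x ∈ C, hammingDist (c + e) c' ≤ hammingDist (c + e) x) →
        ∀ i ∈ S, c' i = c i := by
  intro c hc e he c' hc' hmin i hi
  have hdist : hammingDist c c' ≤ 2 * t :=
    hammingDist_le_two_mul_of_forall_le (C := C) hc ((hammingDist_self_add c e).trans_le he) hmin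
  rw [hammingDist_eq_hammingNorm] at hdist
  have hdiff : -c i + c' i = 0 := hC _ (C.add_mem (C.neg_mem hc) hc') hdist i hi
  exact (neg_add_eq_zero.mp hdiff).symm

/-- If every codeword of `C` of Hamming weight at most `2t` vanishes on all
positions of `S`, then for any codeword `c`, any error `e` of weight at most `t`, and any
codeword `c'` minimizing the Hamming distance to `c + e` over `C`, `c'` agrees with `c`
on all positions of `S`. -/
theorem receding_horizon_corollary
    (F : Type*) [Field F] [Fintype F] [DecidableEq F]
    (n : ℕ) (hn : 0 < n) (C : Submodule F (Fin n → F)) (S : Set (Fin n)) (t : ℕ)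
    (hC : ∀ c ∈ C, hammingNorm c ≤ 2 * t → ∀ i ∈ S, c i = 0) :
    ∀ c ∈ C, ∀ e : Fin n → F, hammingNorm e ≤ t →
      ∀ c' ∈ C, (∀ x ∈ C, hammingDist (c + e) c' ≤ hammingDist (c + e) x) →
        ∀ i ∈ S, c' i = c i :=
  receding_horizon_corollary_general F n C S t hC
end

section
/- Let q, n, k, t, M be natural numbers with q ≥ 2, k ≤ n, t ≤ k, and M ≥ 2. For a natural number m, write E_{m,t} for the sum over i from 0 to t of (m choose i)·(q−1)^i, and set δ := E_{n,t} / q^{n−k} (a rational number). Then, as rational numbers, [ Σ_{α=0}^{t} (k choose α)(q−1)^α · ( Σ_{β=0}^{t−α} ((n−k choose β)(q−1)^β)^M ) / ( Σ_{s=0}^{t−α} (n−k choose s)(q−1)^s ) ] / ( q^{(M−1)(n−k)} · E_{k,t} ) ≤ δ^{M−1} / E_{k,t}. -/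
/-- `E q t m = ∑_{i=0}^{t} (m choose i)(q-1)^i`, as a rational number. -/
def codeBallSum (q t m : ℕ) : ℚ :=
  ∑ i ∈ Finset.range (t + 1), (m.choose i : ℚ) * ((q - 1 : ℕ) : ℚ) ^ i

/-!
Write `c = q - 1`, `a_α = (k choose α) c^α`, `b_β = (n-k choose β) c^β` and
`S_α = ∑_{β ≤ t-α} b_β`. It suffices to bound the bracketed numerator by `E_{n,t}^{M-1}`.
Since the `b_β` are nonnegative, `∑_β b_β^M ≤ S_α^M`, so the `α`-th term is at most
`a_α S_α^{M-1} ≤ a_α S_α E_{n,t}^{M-2}`, and Vandermonde's identity gives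
`∑_α a_α S_α = E_{n,t}`.
-/

open Finset

lemma Finset.sum_pow_succ_div_sum_le {ι K : Type*} [Field K] [LinearOrder K]
    [IsStrictOrderedRing K] {s : Finset ι} {f : ι → K} (hf : ∀ i ∈ s, 0 ≤ f i) (m : ℕ) :
    (∑ i ∈ s, f i ^ (m + 1)) / ∑ i ∈ s, f i ≤ (∑ i ∈ s, f i) ^ m := by
  refine div_le_of_le_mul₀ (sum_nonneg hf) (pow_nonneg (sum_nonneg hf) m) ?_
  rw [mul_sum]
  refine sum_le_sum fun i hi => ?_
  have hfi := hf i hi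
  rw [pow_succ]
  gcongr
  exact single_le_sum hf hi

lemma codeBallSum_nonneg (q t m : ℕ) : 0 ≤ codeBallSum q t m :=
  sum_nonneg fun _ _ => by positivity

lemma codeBallSum_le_codeBallSum {q u t m n : ℕ} (hut : u ≤ t) (hmn : m ≤ n) :
    codeBallSum q u m ≤ codeBallSum q t n := by
  unfold codeBallSum
  calc _ ≤ ∑ i ∈ range (t + 1), (m.choose i : ℚ) * ((q - 1 : ℕ) : ℚ) ^ i :=
        sum_le_sum_of_subset_of_nonneg (range_subset_range.mpr (by omega))
          fun _ _ _ => by positivity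
    _ ≤ _ := sum_le_sum fun i _ => by gcongr

lemma codeBallSum_add (q t a b : ℕ) :
    codeBallSum q t (a + b) = ∑ α ∈ range (t + 1),
      (a.choose α : ℚ) * ((q - 1 : ℕ) : ℚ) ^ α * codeBallSum q (t - α) b := by
  unfold codeBallSum
  set c : ℚ := ((q - 1 : ℕ) : ℚ)
  have vandermonde (i : ℕ) : ((a + b).choose i : ℚ) * c ^ i = ∑ j ∈ range (i + 1),
      (a.choose j : ℚ) * c ^ j * ((b.choose (i - j) : ℚ) * c ^ (i - j)) := by
    rw [← Nat.sum_antidiagonal_eq_sum_range_succ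
      (fun x y => (a.choose x : ℚ) * c ^ x * ((b.choose y : ℚ) * c ^ y)),
      Nat.add_choose_eq, Nat.cast_sum, sum_mul]
    refine sum_congr rfl fun p hp => ?_
    rw [← mem_antidiagonal.mp hp, pow_add]
    push_cast
    ring
  have diag_flip := sum_range_diag_flip (t + 1)
    fun j l => (a.choose j : ℚ) * c ^ j * ((b.choose l : ℚ) * c ^ l)
  simp only [vandermonde, diag_flip, mul_sum]
  refine sum_congr rfl fun α hα => ?_
  rw [show t + 1 - α = t - α + 1 by have := mem_range.mp hα; omega]

lemma sum_mul_sum_pow_div_codeBallSum_le (q t a b m : ℕ) :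
    ∑ α ∈ range (t + 1), (a.choose α : ℚ) * ((q - 1 : ℕ) : ℚ) ^ α *
        (∑ β ∈ range (t - α + 1),
          ((b.choose β : ℚ) * ((q - 1 : ℕ) : ℚ) ^ β) ^ (m + 2)) /
        codeBallSum q (t - α) b ≤
      codeBallSum q t (a + b) ^ (m + 1) := by
  calc _ ≤ ∑ α ∈ range (t + 1), (a.choose α : ℚ) * ((q - 1 : ℕ) : ℚ) ^ α *
          (codeBallSum q (t - α) b * codeBallSum q t (a + b) ^ m) := by
        refine sum_le_sum fun α _ => ?_
        rw [mul_div_assoc]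
        gcongr
        calc _ ≤ codeBallSum q (t - α) b ^ (m + 1) :=
              sum_pow_succ_div_sum_le (fun _ _ => by positivity) (m + 1)
          _ = codeBallSum q (t - α) b * codeBallSum q (t - α) b ^ m := pow_succ' _ _
          _ ≤ codeBallSum q (t - α) b * codeBallSum q t (a + b) ^ m := by
              have := codeBallSum_nonneg q (t - α) b
              gcongr
              exact codeBallSum_le_codeBallSum (Nat.sub_le t α) (Nat.le_add_left b a)
    _ = codeBallSum q t (a + b) ^ (m + 1) := by
        simp only [← mul_assoc, ← sum_mul, ← codeBallSum_add, pow_succ']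

theorem multiple_solutions_prob_bound_general
    (q n k t M : ℕ) (hk : k ≤ n) (hM : 2 ≤ M) :
    (∑ α ∈ Finset.range (t + 1),
        (k.choose α : ℚ) * ((q - 1 : ℕ) : ℚ) ^ α *
          (∑ β ∈ Finset.range (t - α + 1),
              (((n - k).choose β : ℚ) * ((q - 1 : ℕ) : ℚ) ^ β) ^ M) /
          (∑ s ∈ Finset.range (t - α + 1),
              ((n - k).choose s : ℚ) * ((q - 1 : ℕ) : ℚ) ^ s)) /
        ((q : ℚ) ^ ((M - 1) * (n - k)) * codeBallSum q t k) ≤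
      (codeBallSum q t n / (q : ℚ) ^ (n - k)) ^ (M - 1) / codeBallSum q t k := by
  obtain ⟨m, rfl⟩ : ∃ m, M = m + 2 := ⟨M - 2, by omega⟩
  have numerator_le := sum_mul_sum_pow_div_codeBallSum_le q t k (n - k) m
  rw [Nat.add_sub_cancel' hk] at numerator_le
  rw [div_pow, ← pow_mul, mul_comm (n - k), div_div, show m + 2 - 1 = m + 1 by omega]
  have := codeBallSum_nonneg q t k
  exact div_le_div_of_nonneg_right numerator_le (by positivity)

/-- the counting core of the bound on the probability of `M` different
optimal solutions sharing the same last input vector: with `E_{m,t}` as above and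
`δ = E_{n,t}/q^{n-k}`,
`[ Σ_α (k choose α)(q-1)^α (Σ_β ((n-k choose β)(q-1)^β)^M)/(Σ_s (n-k choose s)(q-1)^s) ]
  / (q^{(M-1)(n-k)} E_{k,t}) ≤ δ^{M-1} / E_{k,t}`. -/
theorem multiple_solutions_prob_bound
    (q n k t M : ℕ) (hq : 2 ≤ q) (hk : k ≤ n) (ht : t ≤ k) (hM : 2 ≤ M) :
    (∑ α ∈ Finset.range (t + 1),
        (k.choose α : ℚ) * ((q - 1 : ℕ) : ℚ) ^ α *
          (∑ β ∈ Finset.range (t - α + 1),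
              (((n - k).choose β : ℚ) * ((q - 1 : ℕ) : ℚ) ^ β) ^ M) /
          (∑ s ∈ Finset.range (t - α + 1),
              ((n - k).choose s : ℚ) * ((q - 1 : ℕ) : ℚ) ^ s)) /
        ((q : ℚ) ^ ((M - 1) * (n - k)) * codeBallSum q t k) ≤
      (codeBallSum q t n / (q : ℚ) ^ (n - k)) ^ (M - 1) / codeBallSum q t k :=
  multiple_solutions_prob_bound_general q n k t M hk hM
end
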